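/- arXiv:math/0610293 — 2 statements merged into one kernel-verified Lean document; each statement's English description precedes it below -/
import Mathlib

section
/- Let 𝒞 be a braided monoidal category, and let T: 𝒟 → 𝒞 be the monoidal functor from 𝒞 ⊠ 𝒞-type category 𝒞_{V⊗V} to 𝒞_V given on objects by T(W_1 ⊗ W_2) = W_1 ⊠ W_2, with structure maps φ_0 = l_V^{−1} = r_V^{−1}: V → V ⊠ V and φ_2: (W_1 ⊠ W_2) ⊠ (W_3 ⊠ W_4) → (W_1 ⊠ W_3) ⊠ (W_2 ⊠ W_4) built from associators and one inverse braiding R_− in the middle. If (A, μ_A, ι_A) is a commutative associative algebra in 𝒞_{V⊗V} (with braiding R_+ ⊗ R_−), then (T(A), T(μ_A) ∘ φ_2, T(ι_A) ∘ φ_0) is an associative algebra in 𝒞_V satisfying μ_{T(A)} = μ_{T(A)} ∘ σ_A, where σ_A: T(A) ⊠ T(A) → T(A) ⊠ T(A) is the 'double braiding' automorphism exchanging the two T(A) factors by braiding each left strand over and each right strand under. -/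
open CategoryTheory MonoidalCategory

variable {C : Type*} [Category C] [MonoidalCategory C] [BraidedCategory C]

/-- The structure map `φ₂` of the monoidal functor
`T : 𝒞_{V⊗V} → 𝒞_V`, built from associators and one inverse braiding
`R₋ : X₂ ⊗ Y₁ ⟶ Y₁ ⊗ X₂` in the middle:
`φ₂ = 𝒜 ∘ (id ⊠ 𝒜⁻¹) ∘ (id ⊠ R₋ ⊠ id) ∘ (id ⊠ 𝒜) ∘ 𝒜⁻¹`. -/
def phi2 (X₁ X₂ Y₁ Y₂ : C) :
    (X₁ ⊗ X₂) ⊗ (Y₁ ⊗ Y₂) ⟶ (X₁ ⊗ Y₁) ⊗ (X₂ ⊗ Y₂) :=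
  (α_ X₁ X₂ (Y₁ ⊗ Y₂)).hom ≫ (𝟙 X₁ ⊗ₘ (α_ X₂ Y₁ Y₂).inv) ≫
    (𝟙 X₁ ⊗ₘ ((β_ Y₁ X₂).inv ⊗ₘ 𝟙 Y₂)) ≫ (𝟙 X₁ ⊗ₘ (α_ Y₁ X₂ Y₂).hom) ≫
    (α_ X₁ Y₁ (X₂ ⊗ Y₂)).inv

/-- The inverse of `φ₂` (with the braiding `R₋` undone). -/
def phi2inv (X₁ X₂ Y₁ Y₂ : C) :
    (X₁ ⊗ Y₁) ⊗ (X₂ ⊗ Y₂) ⟶ (X₁ ⊗ X₂) ⊗ (Y₁ ⊗ Y₂) :=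
  (α_ X₁ Y₁ (X₂ ⊗ Y₂)).hom ≫ (𝟙 X₁ ⊗ₘ (α_ Y₁ X₂ Y₂).inv) ≫
    (𝟙 X₁ ⊗ₘ ((β_ Y₁ X₂).hom ⊗ₘ 𝟙 Y₂)) ≫ (𝟙 X₁ ⊗ₘ (α_ X₂ Y₁ Y₂).hom) ≫
    (α_ X₁ X₂ (Y₁ ⊗ Y₂)).inv

/-- The "double braiding" automorphism `σ_A` of `T(A) ⊠ T(A)` for
`A = (A₁, A₂)`, exchanging the two `T(A)` factors by braiding each left strand
over (`R₊`) and each right strand under (`R₋`); equivalently, the conjugate of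
`R₊ ⊠ R₋` by `φ₂`. -/
def sigmaA (A₁ A₂ : C) :
    (A₁ ⊗ A₂) ⊗ (A₁ ⊗ A₂) ⟶ (A₁ ⊗ A₂) ⊗ (A₁ ⊗ A₂) :=
  phi2 A₁ A₂ A₁ A₂ ≫ ((β_ A₁ A₁).hom ⊗ₘ (β_ A₂ A₂).inv) ≫ phi2inv A₁ A₂ A₁ A₂

/-!
`φ₂` is the tensorator `tensorμ` of the tensor product functor `𝒞 × 𝒞 → 𝒞` for the *reverse*
braiding of `𝒞`, so `T(μ_A) ∘ φ₂` is the multiplication of the tensor product of the monoid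
objects `A₁` and `A₂` taken in `𝒞` with the reverse braiding, and the algebra axioms are those of
a tensor product of monoids. Conjugating `R₊ ⊠ R₋` by `φ₂` gives `σ_A`, so
`μ_{T(A)} ∘ σ_A = (μ₁ ⊠ μ₂) ∘ (R₊ ⊠ R₋) ∘ φ₂`, which is `μ_{T(A)}` by commutativity of `A`.
-/

lemma phi2_eq_tensorμ_reverseBraiding (X₁ X₂ Y₁ Y₂ : C) :
    phi2 X₁ X₂ Y₁ Y₂ = @tensorμ C _ _ (reverseBraiding C) X₁ X₂ Y₁ Y₂ := by
  simp only [phi2, tensorμ, id_tensorHom, tensorHom_id]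
  rfl

lemma phi2inv_eq_tensorδ_reverseBraiding (X₁ X₂ Y₁ Y₂ : C) :
    phi2inv X₁ X₂ Y₁ Y₂ = @tensorδ C _ _ (reverseBraiding C) X₁ X₂ Y₁ Y₂ := by
  simp only [phi2inv, tensorδ, id_tensorHom, tensorHom_id]
  rfl

lemma phi2inv_comp_phi2 (X₁ X₂ Y₁ Y₂ : C) :
    phi2inv X₁ X₂ Y₁ Y₂ ≫ phi2 X₁ X₂ Y₁ Y₂ = 𝟙 _ := by
  rw [phi2inv_eq_tensorδ_reverseBraiding, phi2_eq_tensorμ_reverseBraiding,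
    @tensorδ_tensorμ C _ _ (reverseBraiding C)]

lemma sigmaA_comp_phi2 (A₁ A₂ : C) :
    sigmaA A₁ A₂ ≫ phi2 A₁ A₂ A₁ A₂ = phi2 A₁ A₂ A₁ A₂ ≫ ((β_ A₁ A₁).hom ⊗ₘ (β_ A₂ A₂).inv) := by
  rw [sigmaA, Category.assoc, Category.assoc, phi2inv_comp_phi2, Category.comp_id]

abbrev monObjOfTensorHomLaws {X : C} (μ : X ⊗ X ⟶ X) (ι : 𝟙_ C ⟶ X)
    (assoc : (μ ⊗ₘ 𝟙 X) ≫ μ = (α_ X X X).hom ≫ (𝟙 X ⊗ₘ μ) ≫ μ)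
    (unitl : (ι ⊗ₘ 𝟙 X) ≫ μ = (λ_ X).hom) (unitr : (𝟙 X ⊗ₘ ι) ≫ μ = (ρ_ X).hom) : MonObj X where
  one := ι
  mul := μ
  one_mul := by simpa only [tensorHom_id] using unitl
  mul_one := by simpa only [id_tensorHom] using unitr
  mul_assoc := by simpa only [tensorHom_id, id_tensorHom] using assoc

/-- Let `𝒞_V` be a braided tensor category and let `𝒞_{V⊗V} = 𝒞_V × 𝒞_V`
carry the componentwise tensor product and the braiding `R₊ ⊗ R₋`.  If
`(A, μ_A, ι_A)` (with `A = (A₁, A₂)`) is a commutative associative algebra in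
`𝒞_{V⊗V}`, then `(T(A), T(μ_A) ∘ φ₂, T(ι_A) ∘ φ₀)` is an associative algebra
in `𝒞_V` satisfying `μ_{T(A)} = μ_{T(A)} ∘ σ_A`, where `T(A) = A₁ ⊗ A₂`,
`φ₀ = l_V⁻¹ = r_V⁻¹ : 𝟙 → 𝟙 ⊗ 𝟙`, and `σ_A` is the double-braiding
automorphism of `T(A) ⊗ T(A)`. -/
theorem T_of_commutative_algebra_is_algebra
    (A₁ A₂ : C)
    (μ₁ : A₁ ⊗ A₁ ⟶ A₁) (ι₁ : 𝟙_ C ⟶ A₁)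
    (μ₂ : A₂ ⊗ A₂ ⟶ A₂) (ι₂ : 𝟙_ C ⟶ A₂)
    -- `(A₁, μ₁, ι₁)` is an associative algebra in `𝒞_V`
    (assoc₁ : (μ₁ ⊗ₘ 𝟙 A₁) ≫ μ₁ = (α_ A₁ A₁ A₁).hom ≫ (𝟙 A₁ ⊗ₘ μ₁) ≫ μ₁)
    (unit₁l : (ι₁ ⊗ₘ 𝟙 A₁) ≫ μ₁ = (λ_ A₁).hom)
    (unit₁r : (𝟙 A₁ ⊗ₘ ι₁) ≫ μ₁ = (ρ_ A₁).hom)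
    (assoc₂ : (μ₂ ⊗ₘ 𝟙 A₂) ≫ μ₂ = (α_ A₂ A₂ A₂).hom ≫ (𝟙 A₂ ⊗ₘ μ₂) ≫ μ₂)
    (unit₂l : (ι₂ ⊗ₘ 𝟙 A₂) ≫ μ₂ = (λ_ A₂).hom)
    (unit₂r : (𝟙 A₂ ⊗ₘ ι₂) ≫ μ₂ = (ρ_ A₂).hom)
    -- `A` is commutative with respect to the braiding `R₊ ⊗ R₋` of `𝒞_{V⊗V}`
    (comm₁ : (β_ A₁ A₁).hom ≫ μ₁ = μ₁)
    (comm₂ : (β_ A₂ A₂).inv ≫ μ₂ = μ₂) :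
    -- `(T(A), T(μ_A) ∘ φ₂, T(ι_A) ∘ φ₀)` is an associative algebra with
    -- `μ_{T(A)} = μ_{T(A)} ∘ σ_A`
    ((((λ_ (𝟙_ C)).inv ≫ (ι₁ ⊗ₘ ι₂)) ⊗ₘ 𝟙 (A₁ ⊗ A₂)) ≫
        (phi2 A₁ A₂ A₁ A₂ ≫ (μ₁ ⊗ₘ μ₂)) = (λ_ (A₁ ⊗ A₂)).hom) ∧
    ((𝟙 (A₁ ⊗ A₂) ⊗ₘ ((λ_ (𝟙_ C)).inv ≫ (ι₁ ⊗ₘ ι₂))) ≫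
        (phi2 A₁ A₂ A₁ A₂ ≫ (μ₁ ⊗ₘ μ₂)) = (ρ_ (A₁ ⊗ A₂)).hom) ∧
    (((phi2 A₁ A₂ A₁ A₂ ≫ (μ₁ ⊗ₘ μ₂)) ⊗ₘ 𝟙 (A₁ ⊗ A₂)) ≫
        (phi2 A₁ A₂ A₁ A₂ ≫ (μ₁ ⊗ₘ μ₂)) =
      (α_ (A₁ ⊗ A₂) (A₁ ⊗ A₂) (A₁ ⊗ A₂)).hom ≫
        (𝟙 (A₁ ⊗ A₂) ⊗ₘ (phi2 A₁ A₂ A₁ A₂ ≫ (μ₁ ⊗ₘ μ₂))) ≫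
        (phi2 A₁ A₂ A₁ A₂ ≫ (μ₁ ⊗ₘ μ₂))) ∧
    (phi2 A₁ A₂ A₁ A₂ ≫ (μ₁ ⊗ₘ μ₂) =
      sigmaA A₁ A₂ ≫ phi2 A₁ A₂ A₁ A₂ ≫ (μ₁ ⊗ₘ μ₂)) := by
  let _ : MonObj A₁ := monObjOfTensorHomLaws μ₁ ι₁ assoc₁ unit₁l unit₁r
  let _ : MonObj A₂ := monObjOfTensorHomLaws μ₂ ι₂ assoc₂ unit₂l unit₂r
  refine ⟨?_, ?_, ?_, ?_⟩
  · simp only [phi2_eq_tensorμ_reverseBraiding, tensorHom_id]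
    exact @MonObj.Mon_tensor_one_mul C _ _ (reverseBraiding C) A₁ A₂ _ _
  · simp only [phi2_eq_tensorμ_reverseBraiding, id_tensorHom]
    exact @MonObj.Mon_tensor_mul_one C _ _ (reverseBraiding C) A₁ A₂ _ _
  · simp only [phi2_eq_tensorμ_reverseBraiding, tensorHom_id, id_tensorHom]
    exact @MonObj.Mon_tensor_mul_assoc C _ _ (reverseBraiding C) A₁ A₂ _ _
  · rw [← Category.assoc, sigmaA_comp_phi2, Category.assoc, tensorHom_comp_tensorHom, comm₁, comm₂]
end

section
/- In an open-closed 𝒞_V|𝒞_{V⊗V}-algebra, the morphism ι_{cl-op}: T(A_cl) → A_op defined as the composition T(A_cl) → T(A_cl) ⊠ 1 → T(A_cl) ⊠ A_op → A_op (using the inverse right unit, the unit ι_op of A_op, and μ_{cl-op}) is an algebra homomorphism: ι_{cl-op} ∘ (T(ι_cl) ∘ φ_0) = ι_op (preservation of units), and μ_op ∘ (ι_{cl-op} ⊠ ι_{cl-op}) = ι_{cl-op} ∘ T(μ_cl) ∘ φ_2 (preservation of multiplication). -/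
open CategoryTheory MonoidalCategory

set_option maxHeartbeats 1000000

variable {C : Type*} [Category C] [MonoidalCategory C] [BraidedCategory C]

/-- The half-braiding `σ₁ : T(A_cl) ⊠ A_op ⟶ A_op ⊠ T(A_cl)`, built from the
braiding `R₊` on the left tensor strand of `T(A_cl) = A₁ ⊗ A₂` and the inverse
braiding `R₋` on the right strand:
`σ₁ = (R₊ ⊠ id) ∘ 𝒜 ∘ (id ⊠ R₋) ∘ 𝒜⁻¹`. -/
def sigma1 (A₁ A₂ Aop : C) : (A₁ ⊗ A₂) ⊗ Aop ⟶ Aop ⊗ (A₁ ⊗ A₂) :=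
  (α_ A₁ A₂ Aop).hom ≫ (𝟙 A₁ ⊗ₘ (β_ Aop A₂).inv) ≫ (α_ A₁ Aop A₂).inv ≫
    ((β_ A₁ Aop).hom ⊗ₘ 𝟙 A₂) ≫ (α_ Aop A₁ A₂).hom

/-!
Write `ι(a) = a · 1` for the action `·` of `T(A_cl)` on `A_op`. Mixed associativity and
the unit of `A_op` give `ι(a) * b = a · b`, so `ι(a) * ι(b) = a · (b · 1)`, which is
`(a b) · 1 = ι(a b)` by closed associativity. Preservation of units is the unit property
of the action, read through `ι_cl · 1`.
-/

section UnitAction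

variable {D : Type*} [Category D] [MonoidalCategory D] {X A : D}

def unitAction (ι : 𝟙_ D ⟶ A) (act : X ⊗ A ⟶ A) : X ⟶ A :=
  (ρ_ X).inv ≫ (𝟙 X ⊗ₘ ι) ≫ act

theorem comp_rightUnitor_inv_comp_id_tensorHom {Y : D} (f : 𝟙_ D ⟶ X) (g : 𝟙_ D ⟶ Y) :
    f ≫ (ρ_ X).inv ≫ (𝟙 X ⊗ₘ g) = g ≫ (λ_ Y).inv ≫ (f ⊗ₘ 𝟙 Y) := by
  rw [id_tensorHom, tensorHom_id, rightUnitor_inv_naturality_assoc, ← whisker_exchange,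
    leftUnitor_inv_naturality_assoc, unitors_inv_equal]

theorem comp_unitAction_of_unit_act {ι : 𝟙_ D ⟶ A} {act : X ⊗ A ⟶ A} (u : 𝟙_ D ⟶ X)
    (unit_act : (λ_ A).inv ≫ (u ⊗ₘ 𝟙 A) ≫ act = 𝟙 A) :
    u ≫ unitAction ι act = ι := by
  rw [unitAction, reassoc_of% comp_rightUnitor_inv_comp_id_tensorHom u ι, unit_act,
    Category.comp_id]

theorem unitAction_tensorHom_id_comp_mul {μ : A ⊗ A ⟶ A} {ι : 𝟙_ D ⟶ A}
    {act : X ⊗ A ⟶ A} (unit_left : (ι ⊗ₘ 𝟙 A) ≫ μ = (λ_ A).hom)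
    (assoc_mix : (𝟙 X ⊗ₘ μ) ≫ act = (α_ X A A).inv ≫ (act ⊗ₘ 𝟙 A) ≫ μ) :
    (unitAction ι act ⊗ₘ 𝟙 A) ≫ μ = act := by
  have act_mul : (act ⊗ₘ 𝟙 A) ≫ μ = (α_ X A A).hom ≫ (𝟙 X ⊗ₘ μ) ≫ act := by
    rw [assoc_mix, Iso.hom_inv_id_assoc]
  calc (unitAction ι act ⊗ₘ 𝟙 A) ≫ μ
      = ((ρ_ X).inv ⊗ₘ 𝟙 A) ≫ (α_ X (𝟙_ D) A).hom ≫ (𝟙 X ⊗ₘ ((ι ⊗ₘ 𝟙 A) ≫ μ)) ≫ act := by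
        simp only [unitAction, comp_tensor_id, Category.assoc, act_mul,
          associator_naturality_assoc, id_tensor_comp]
    _ = act := by
        rw [unit_left]
        simp only [tensorHom_id, id_tensorHom, triangle_assoc_comp_right_inv_assoc,
          whiskerLeft_inv_hom_assoc]

theorem id_tensorHom_unitAction_comp_act {m : X ⊗ X ⟶ X} {ι : 𝟙_ D ⟶ A}
    {act : X ⊗ A ⟶ A}
    (assoc_cl : (𝟙 X ⊗ₘ act) ≫ act = (α_ X X A).inv ≫ (m ⊗ₘ 𝟙 A) ≫ act) :
    (𝟙 X ⊗ₘ unitAction ι act) ≫ act = m ≫ unitAction ι act := by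
  calc (𝟙 X ⊗ₘ unitAction ι act) ≫ act
      = X ◁ (ρ_ X).inv ≫ (α_ X X (𝟙_ D)).inv ≫ (X ⊗ X) ◁ ι ≫ m ▷ A ≫ act := by
        rw [unitAction, id_tensor_comp, id_tensor_comp, Category.assoc, Category.assoc, assoc_cl]
        simp only [id_tensorHom, tensorHom_id, associator_inv_naturality_right_assoc]
    _ = (ρ_ (X ⊗ X)).inv ≫ (X ⊗ X) ◁ ι ≫ m ▷ A ≫ act := by
        rw [whiskerLeft_rightUnitor_inv, Category.assoc, Iso.hom_inv_id_assoc]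
    _ = m ≫ unitAction ι act := by
        rw [whisker_exchange_assoc, ← rightUnitor_inv_naturality_assoc, unitAction, id_tensorHom]

theorem unitAction_tensorHom_unitAction_comp_mul {μ : A ⊗ A ⟶ A} {ι : 𝟙_ D ⟶ A}
    {m : X ⊗ X ⟶ X} {act : X ⊗ A ⟶ A} (unit_left : (ι ⊗ₘ 𝟙 A) ≫ μ = (λ_ A).hom)
    (assoc_mix : (𝟙 X ⊗ₘ μ) ≫ act = (α_ X A A).inv ≫ (act ⊗ₘ 𝟙 A) ≫ μ)
    (assoc_cl : (𝟙 X ⊗ₘ act) ≫ act = (α_ X X A).inv ≫ (m ⊗ₘ 𝟙 A) ≫ act) :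
    (unitAction ι act ⊗ₘ unitAction ι act) ≫ μ = m ≫ unitAction ι act := by
  rw [← id_tensor_comp_tensor_id, Category.assoc,
    unitAction_tensorHom_id_comp_mul unit_left assoc_mix,
    id_tensorHom_unitAction_comp_act assoc_cl]

end UnitAction

theorem iota_clop_is_algebra_homomorphism_general
    (A₁ A₂ Aop : C)
    (μop : Aop ⊗ Aop ⟶ Aop) (ιop : 𝟙_ C ⟶ Aop)
    (μ₁ : A₁ ⊗ A₁ ⟶ A₁) (ι₁ : 𝟙_ C ⟶ A₁)
    (μ₂ : A₂ ⊗ A₂ ⟶ A₂) (ι₂ : 𝟙_ C ⟶ A₂)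
    (μco : (A₁ ⊗ A₂) ⊗ Aop ⟶ Aop)
    -- `(A_op, μ_op, ι_op)` is an associative algebra in `𝒞_V`
    (unitOpl : (ιop ⊗ₘ 𝟙 Aop) ≫ μop = (λ_ Aop).hom)
    -- unit property of `μ_{cl-op}`
    (unitCo : (λ_ Aop).inv ≫
        ((((λ_ (𝟙_ C)).inv ≫ (ι₁ ⊗ₘ ι₂)) ⊗ₘ 𝟙 Aop)) ≫ μco = 𝟙 Aop)
    -- closed associativity
    (assocCl : (𝟙 (A₁ ⊗ A₂) ⊗ₘ μco) ≫ μco =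
      (α_ (A₁ ⊗ A₂) (A₁ ⊗ A₂) Aop).inv ≫
        ((phi2 A₁ A₂ A₁ A₂ ≫ (μ₁ ⊗ₘ μ₂)) ⊗ₘ 𝟙 Aop) ≫ μco)
    -- mixed associativity
    (assocMix : (𝟙 (A₁ ⊗ A₂) ⊗ₘ μop) ≫ μco =
      (α_ (A₁ ⊗ A₂) Aop Aop).inv ≫ (μco ⊗ₘ 𝟙 Aop) ≫ μop) :
    -- `ι_{cl-op}` preserves units and multiplications
    (((λ_ (𝟙_ C)).inv ≫ (ι₁ ⊗ₘ ι₂)) ≫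
        ((ρ_ (A₁ ⊗ A₂)).inv ≫ (𝟙 (A₁ ⊗ A₂) ⊗ₘ ιop) ≫ μco) = ιop) ∧
    ((((ρ_ (A₁ ⊗ A₂)).inv ≫ (𝟙 (A₁ ⊗ A₂) ⊗ₘ ιop) ≫ μco) ⊗ₘ
        ((ρ_ (A₁ ⊗ A₂)).inv ≫ (𝟙 (A₁ ⊗ A₂) ⊗ₘ ιop) ≫ μco)) ≫ μop =
      phi2 A₁ A₂ A₁ A₂ ≫ (μ₁ ⊗ₘ μ₂) ≫
        ((ρ_ (A₁ ⊗ A₂)).inv ≫ (𝟙 (A₁ ⊗ A₂) ⊗ₘ ιop) ≫ μco)) :=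
  ⟨comp_unitAction_of_unit_act _ unitCo,
    (unitAction_tensorHom_unitAction_comp_mul unitOpl assocMix assocCl).trans
      (Category.assoc _ _ _)⟩

/-- In an open-closed `𝒞_V|𝒞_{V⊗V}`-algebra — with `(A_op, μ_op, ι_op)` an
associative algebra in `𝒞_V`, `(A_cl, μ_cl, ι_cl)` (with `A_cl = (A₁, A₂)`) a
commutative associative algebra in `𝒞_{V⊗V}`, and
`μ_{cl-op} : T(A_cl) ⊠ A_op ⟶ A_op` satisfying the unit property, closed
associativity, mixed associativity and the commutativity axiom — the morphism
`ι_{cl-op} : T(A_cl) → A_op` defined as the composition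
`T(A_cl) → T(A_cl) ⊠ 𝟙 → T(A_cl) ⊠ A_op → A_op` is an algebra homomorphism:
it preserves units and multiplications. -/
theorem iota_clop_is_algebra_homomorphism
    (A₁ A₂ Aop : C)
    (μop : Aop ⊗ Aop ⟶ Aop) (ιop : 𝟙_ C ⟶ Aop)
    (μ₁ : A₁ ⊗ A₁ ⟶ A₁) (ι₁ : 𝟙_ C ⟶ A₁)
    (μ₂ : A₂ ⊗ A₂ ⟶ A₂) (ι₂ : 𝟙_ C ⟶ A₂)
    (μco : (A₁ ⊗ A₂) ⊗ Aop ⟶ Aop)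
    -- `(A_op, μ_op, ι_op)` is an associative algebra in `𝒞_V`
    (assocOp : (μop ⊗ₘ 𝟙 Aop) ≫ μop = (α_ Aop Aop Aop).hom ≫ (𝟙 Aop ⊗ₘ μop) ≫ μop)
    (unitOpl : (ιop ⊗ₘ 𝟙 Aop) ≫ μop = (λ_ Aop).hom)
    (unitOpr : (𝟙 Aop ⊗ₘ ιop) ≫ μop = (ρ_ Aop).hom)
    -- `(A_cl, μ_cl, ι_cl)` is a commutative associative algebra in `𝒞_{V⊗V}`
    (assoc₁ : (μ₁ ⊗ₘ 𝟙 A₁) ≫ μ₁ = (α_ A₁ A₁ A₁).hom ≫ (𝟙 A₁ ⊗ₘ μ₁) ≫ μ₁)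
    (unit₁l : (ι₁ ⊗ₘ 𝟙 A₁) ≫ μ₁ = (λ_ A₁).hom)
    (unit₁r : (𝟙 A₁ ⊗ₘ ι₁) ≫ μ₁ = (ρ_ A₁).hom)
    (assoc₂ : (μ₂ ⊗ₘ 𝟙 A₂) ≫ μ₂ = (α_ A₂ A₂ A₂).hom ≫ (𝟙 A₂ ⊗ₘ μ₂) ≫ μ₂)
    (unit₂l : (ι₂ ⊗ₘ 𝟙 A₂) ≫ μ₂ = (λ_ A₂).hom)
    (unit₂r : (𝟙 A₂ ⊗ₘ ι₂) ≫ μ₂ = (ρ_ A₂).hom)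
    (comm₁ : (β_ A₁ A₁).hom ≫ μ₁ = μ₁)
    (comm₂ : (β_ A₂ A₂).inv ≫ μ₂ = μ₂)
    -- unit property of `μ_{cl-op}`
    (unitCo : (λ_ Aop).inv ≫
        ((((λ_ (𝟙_ C)).inv ≫ (ι₁ ⊗ₘ ι₂)) ⊗ₘ 𝟙 Aop)) ≫ μco = 𝟙 Aop)
    -- closed associativity
    (assocCl : (𝟙 (A₁ ⊗ A₂) ⊗ₘ μco) ≫ μco =
      (α_ (A₁ ⊗ A₂) (A₁ ⊗ A₂) Aop).inv ≫
        ((phi2 A₁ A₂ A₁ A₂ ≫ (μ₁ ⊗ₘ μ₂)) ⊗ₘ 𝟙 Aop) ≫ μco)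
    -- mixed associativity
    (assocMix : (𝟙 (A₁ ⊗ A₂) ⊗ₘ μop) ≫ μco =
      (α_ (A₁ ⊗ A₂) Aop Aop).inv ≫ (μco ⊗ₘ 𝟙 Aop) ≫ μop)
    -- commutativity
    (commCo : (𝟙 (A₁ ⊗ A₂) ⊗ₘ μop) ≫ μco =
      (α_ (A₁ ⊗ A₂) Aop Aop).inv ≫ (sigma1 A₁ A₂ Aop ⊗ₘ 𝟙 Aop) ≫
        (α_ Aop (A₁ ⊗ A₂) Aop).hom ≫ (𝟙 Aop ⊗ₘ μco) ≫ μop) :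
    -- `ι_{cl-op}` preserves units and multiplications
    (((λ_ (𝟙_ C)).inv ≫ (ι₁ ⊗ₘ ι₂)) ≫
        ((ρ_ (A₁ ⊗ A₂)).inv ≫ (𝟙 (A₁ ⊗ A₂) ⊗ₘ ιop) ≫ μco) = ιop) ∧
    ((((ρ_ (A₁ ⊗ A₂)).inv ≫ (𝟙 (A₁ ⊗ A₂) ⊗ₘ ιop) ≫ μco) ⊗ₘ
        ((ρ_ (A₁ ⊗ A₂)).inv ≫ (𝟙 (A₁ ⊗ A₂) ⊗ₘ ιop) ≫ μco)) ≫ μop =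
      phi2 A₁ A₂ A₁ A₂ ≫ (μ₁ ⊗ₘ μ₂) ≫
        ((ρ_ (A₁ ⊗ A₂)).inv ≫ (𝟙 (A₁ ⊗ A₂) ⊗ₘ ιop) ≫ μco)) :=
  iota_clop_is_algebra_homomorphism_general A₁ A₂ Aop μop ιop μ₁ ι₁ μ₂ ι₂ μco unitOpl unitCo assocCl
    assocMix
end
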